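/- arXiv:2111.09804 — 12 statements merged into one kernel-verified Lean document; each statement's English description precedes it below -/
import Mathlib

section
/- In a bisemigroup, each element has at most one left complement: if y and z are both ℓ-complements of an element x, then y = z. Likewise, each element has at most one right complement. -/
/-- A bisemigroup: a partially ordered set with two semigroup operations
`mul` and `add`, both monotone in each argument, satisfying the
hemidistributive laws. -/
structure BisemigroupOn (A : Type*) [PartialOrder A] where
  mul : A → A → A
  add : A → A → A
  mul_assoc : ∀ x y z, mul (mul x y) z = mul x (mul y z)
  add_assoc : ∀ x y z, add (add x y) z = add x (add y z)
  mul_mono_left : ∀ {x y : A} (z), x ≤ y → mul x z ≤ mul y z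
  mul_mono_right : ∀ {x y : A} (z), x ≤ y → mul z x ≤ mul z y
  add_mono_left : ∀ {x y : A} (z), x ≤ y → add x z ≤ add y z
  add_mono_right : ∀ {x y : A} (z), x ≤ y → add z x ≤ add z y
  hemi_left : ∀ x y z, mul x (add y z) ≤ add (mul x y) z
  hemi_right : ∀ x y z, mul (add x y) z ≤ add x (mul y z)

/-- `y` is a left complement (ℓ-complement) of `x`. -/
def BisemigroupOn.IsLeftCompl {A : Type*} [PartialOrder A]
    (S : BisemigroupOn A) (x y : A) : Prop :=
  ∀ w, S.add w (S.mul y x) ≤ w ∧ S.add (S.mul y x) w ≤ w ∧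
    w ≤ S.mul w (S.add x y) ∧ w ≤ S.mul (S.add x y) w

/-- `y` is a right complement (r-complement) of `x`. -/
def BisemigroupOn.IsRightCompl {A : Type*} [PartialOrder A]
    (S : BisemigroupOn A) (x y : A) : Prop :=
  ∀ w, S.add w (S.mul x y) ≤ w ∧ S.add (S.mul x y) w ≤ w ∧
    w ≤ S.mul w (S.add y x) ∧ w ≤ S.mul (S.add y x) w

namespace BisemigroupOn

variable {A : Type*} [PartialOrder A] {S : BisemigroupOn A} {x u v : A}

theorem IsLeftCompl.le (hu : S.IsLeftCompl x u) (hv : S.IsLeftCompl x v) : u ≤ v :=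
  calc u ≤ S.mul u (S.add x v) := (hv u).2.2.1
    _ ≤ S.add (S.mul u x) v := S.hemi_left u x v
    _ ≤ v := (hu v).2.1

theorem IsRightCompl.le (hu : S.IsRightCompl x u) (hv : S.IsRightCompl x v) : u ≤ v :=
  calc u ≤ S.mul (S.add v x) u := (hv u).2.2.2
    _ ≤ S.add v (S.mul x u) := S.hemi_right v x u
    _ ≤ v := (hu v).1

end BisemigroupOn

/-- Each element of a bisemigroup has at most one ℓ-complement and at most
one r-complement. -/
theorem bisemigroup_compl_unique {A : Type*} [PartialOrder A]
    (S : BisemigroupOn A) (x y z : A) :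
    (S.IsLeftCompl x y → S.IsLeftCompl x z → y = z) ∧
    (S.IsRightCompl x y → S.IsRightCompl x z → y = z) :=
  ⟨fun hy hz => (hy.le hz).antisymm (hz.le hy),
    fun hy hz => (hy.le hz).antisymm (hz.le hy)⟩
end

section
/- Residuation law for complements: in a bisemigroup, if r is a right complement of an element x, then for all y, z: x·y ≤ z if and only if y ≤ r + z. Dually, if l is a left complement of y, then for all x, z: x ≤ y + z if and only if l·x ≤ z. -/
/-! The complement conditions supply a unit `w ≤ (b + a)·w` and a counit `(a·b) + w ≤ w`;
composed with the hemidistributive laws they make `a·(-)` left adjoint to `b + (-)`.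
An r-complement `r` of `x` gives this for `(a, b) = (x, r)`, an ℓ-complement `l` of `y`
for `(a, b) = (l, y)`. -/

namespace BisemigroupOn

variable {A : Type*} [PartialOrder A]

theorem galoisConnection_mul_add (S : BisemigroupOn A) {a b : A}
    (counit : ∀ w, S.add (S.mul a b) w ≤ w) (unit : ∀ w, w ≤ S.mul (S.add b a) w) :
    GaloisConnection (S.mul a) (S.add b) := by
  intro y z
  constructor
  · intro h
    calc y ≤ S.mul (S.add b a) y := unit y
      _ ≤ S.add b (S.mul a y) := S.hemi_right b a y
      _ ≤ S.add b z := S.add_mono_right b h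
  · intro h
    calc S.mul a y ≤ S.mul a (S.add b z) := S.mul_mono_right a h
      _ ≤ S.add (S.mul a b) z := S.hemi_left a b z
      _ ≤ z := counit z

theorem IsRightCompl.galoisConnection {S : BisemigroupOn A} {x r : A}
    (h : S.IsRightCompl x r) : GaloisConnection (S.mul x) (S.add r) :=
  S.galoisConnection_mul_add (fun w => (h w).2.1) (fun w => (h w).2.2.2)

theorem IsLeftCompl.galoisConnection {S : BisemigroupOn A} {y l : A}
    (h : S.IsLeftCompl y l) : GaloisConnection (S.mul l) (S.add y) :=
  S.galoisConnection_mul_add (fun w => (h w).2.1) (fun w => (h w).2.2.2)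

end BisemigroupOn

/-- Residuation laws for complements in a bisemigroup. -/
theorem bisemigroup_residuation_for_complements {A : Type*} [PartialOrder A]
    (S : BisemigroupOn A) :
    (∀ x r, S.IsRightCompl x r → ∀ y z, S.mul x y ≤ z ↔ y ≤ S.add r z) ∧
    (∀ y l, S.IsLeftCompl y l → ∀ x z, x ≤ S.add y z ↔ S.mul l x ≤ z) :=
  ⟨fun _ _ h => h.galoisConnection, fun _ _ h x z => (h.galoisConnection x z).symm⟩
end

section
/- De Morgan law for bisemigroups: in a bisemigroup, if p is an ℓ-complement of x and q is an ℓ-complement of y, then q + p is an ℓ-complement of x·y. Moreover, complementation is antitone: if x ≤ y and both have ℓ-complements p and q respectively, then q ≤ p. -/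
/-! An ℓ-complement `p` of `x` makes `p·x` additively deflating and `x + p` multiplicatively
inflating; the first property passes down along `≤`, the second up. Hemidistributivity gives
`(q + p)·(x·y) ≤ q·y` and `x + p ≤ x·y + (q + p)`, which is the De Morgan law, and
`q ≤ q·(x + p) ≤ q·(y + p) ≤ q·y + p ≤ p` when `x ≤ y`. -/

namespace BisemigroupOn

variable {A : Type*} [PartialOrder A] (S : BisemigroupOn A)

def IsAddDeflating (a : A) : Prop :=
  ∀ w, S.add w a ≤ w ∧ S.add a w ≤ w

def IsMulInflating (b : A) : Prop :=
  ∀ w, w ≤ S.mul w b ∧ w ≤ S.mul b w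

variable {S}

theorem IsAddDeflating.anti {a b : A} (hb : S.IsAddDeflating b) (hab : a ≤ b) :
    S.IsAddDeflating a := fun w =>
  ⟨(S.add_mono_right w hab).trans (hb w).1, (S.add_mono_left w hab).trans (hb w).2⟩

theorem IsMulInflating.mono {a b : A} (ha : S.IsMulInflating a) (hab : a ≤ b) :
    S.IsMulInflating b := fun w =>
  ⟨(ha w).1.trans (S.mul_mono_right w hab), (ha w).2.trans (S.mul_mono_left w hab)⟩

theorem isLeftCompl_iff {x p : A} :
    S.IsLeftCompl x p ↔ S.IsAddDeflating (S.mul p x) ∧ S.IsMulInflating (S.add x p) := by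
  simp only [IsLeftCompl, IsAddDeflating, IsMulInflating, ← forall_and, and_assoc]

theorem add_mul_le_of_isLeftCompl {x p : A} (hp : S.IsLeftCompl x p) (q : A) :
    S.mul (S.add q p) x ≤ q :=
  calc S.mul (S.add q p) x ≤ S.add q (S.mul p x) := S.hemi_right q p x
    _ ≤ q := (hp q).1

theorem le_mul_add_of_isLeftCompl {x y p : A} (hxy : x ≤ y) (hp : S.IsLeftCompl x p) (z : A) :
    z ≤ S.add (S.mul z y) p :=
  calc z ≤ S.mul z (S.add x p) := (hp z).2.2.1
    _ ≤ S.mul z (S.add y p) := S.mul_mono_right z (S.add_mono_left p hxy)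
    _ ≤ S.add (S.mul z y) p := S.hemi_left z y p

theorem isLeftCompl_mul {x y p q : A} (hp : S.IsLeftCompl x p) (hq : S.IsLeftCompl y q) :
    S.IsLeftCompl (S.mul x y) (S.add q p) := by
  refine isLeftCompl_iff.2 ⟨(isLeftCompl_iff.1 hq).1.anti ?_, (isLeftCompl_iff.1 hp).2.mono ?_⟩
  · calc S.mul (S.add q p) (S.mul x y) = S.mul (S.mul (S.add q p) x) y :=
          (S.mul_assoc _ _ _).symm
      _ ≤ S.mul q y := S.mul_mono_left y (add_mul_le_of_isLeftCompl hp q)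
  · calc S.add x p ≤ S.add (S.add (S.mul x y) q) p :=
          S.add_mono_left p (le_mul_add_of_isLeftCompl le_rfl hq x)
      _ = S.add (S.mul x y) (S.add q p) := S.add_assoc _ _ _

theorem IsLeftCompl.antitone {x y p q : A} (hxy : x ≤ y) (hp : S.IsLeftCompl x p)
    (hq : S.IsLeftCompl y q) : q ≤ p :=
  calc q ≤ S.add (S.mul q y) p := le_mul_add_of_isLeftCompl hxy hp q
    _ ≤ p := (hq p).2.1

end BisemigroupOn

/-- De Morgan law for ℓ-complements in a bisemigroup, and antitonicity of
ℓ-complementation. -/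
theorem bisemigroup_deMorgan_and_antitone {A : Type*} [PartialOrder A]
    (S : BisemigroupOn A) :
    (∀ x y p q, S.IsLeftCompl x p → S.IsLeftCompl y q →
      S.IsLeftCompl (S.mul x y) (S.add q p)) ∧
    (∀ x y p q, x ≤ y → S.IsLeftCompl x p → S.IsLeftCompl y q → q ≤ p) :=
  ⟨fun _ _ _ _ => BisemigroupOn.isLeftCompl_mul,
    fun _ _ _ _ => BisemigroupOn.IsLeftCompl.antitone⟩
end

section
/- Hemidistributivity in involutive residuated posemigroups: let ⟨A, ≤, ·⟩ be a partially ordered semigroup with multiplication monotone in each argument, equipped with two maps ℓ, r: A → A satisfying ℓ(r(x)) = x = r(ℓ(x)) and the residuation laws x·y ≤ z ⟺ y ≤ r(ℓ(z)·x) and x·y ≤ z ⟺ x ≤ ℓ(y·r(z)) for all x, y, z. Define x + y := r(ℓ(y)·ℓ(x)). Then the hemidistributive law x·(y+z) ≤ (x·y)+z holds for all x, y, z. -/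
theorem involutive_posemigroup_hemidistributivity_general {A : Type*} [PartialOrder A]
    (mul : A → A → A)
    (mul_assoc : ∀ x y z, mul (mul x y) z = mul x (mul y z))
    (mul_mono_left : ∀ {x y : A} (z), x ≤ y → mul x z ≤ mul y z)
    (l r : A → A)
    (rl : ∀ x, r (l x) = x)
    (res₁ : ∀ x y z, mul x y ≤ z ↔ y ≤ r (mul (l z) x))
    (res₂ : ∀ x y z, mul x y ≤ z ↔ x ≤ l (mul y (r z)))
    (x y z : A) :
    mul x (r (mul (l z) (l y))) ≤ r (mul (l z) (l (mul x y))) := by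
  have h_lxy_mul : mul (l (mul x y)) x ≤ l y := by
    rw [res₂, rl]
  have h_ly_mul_sum : mul (l y) (r (mul (l z) (l y))) ≤ z := (res₁ _ _ _).mpr le_rfl
  -- By `res₁` the goal is `l (x * y) * x * (y + z) ≤ z`.
  rw [← res₁, ← mul_assoc]
  exact (mul_mono_left _ h_lxy_mul).trans h_ly_mul_sum

/-- Hemidistributivity in involutive residuated posemigroups: with
`x + y := r (l y * l x)`, the law `x * (y + z) ≤ (x * y) + z` holds. -/
theorem involutive_posemigroup_hemidistributivity {A : Type*} [PartialOrder A]
    (mul : A → A → A)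
    (mul_assoc : ∀ x y z, mul (mul x y) z = mul x (mul y z))
    (mul_mono_left : ∀ {x y : A} (z), x ≤ y → mul x z ≤ mul y z)
    (mul_mono_right : ∀ {x y : A} (z), x ≤ y → mul z x ≤ mul z y)
    (l r : A → A)
    (lr : ∀ x, l (r x) = x) (rl : ∀ x, r (l x) = x)
    (res₁ : ∀ x y z, mul x y ≤ z ↔ y ≤ r (mul (l z) x))
    (res₂ : ∀ x y z, mul x y ≤ z ↔ x ≤ l (mul y (r z)))
    (x y z : A) :
    mul x (r (mul (l z) (l y))) ≤ r (mul (l z) (l (mul x y))) :=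
  involutive_posemigroup_hemidistributivity_general mul mul_assoc mul_mono_left l r rl res₁ res₂ x y
    z
end

section
/- Let A be a Brouwerian algebra with a distinguished element 0, and define x + y := (0 ⇨ (x ⊓ y)) ⊓ (x ⊔ y). Then + is commutative and associative, 0 is a unit for + (x + 0 = x for all x), and the hemidistributive law x ⊓ (y + z) ≤ (x ⊓ y) + z holds for all x, y, z. In particular, moreover, x + (y + z) = (0 ⇨ (x ⊓ y ⊓ z)) ⊓ (x ⊔ y ⊔ z). -/
/-!
Write `x + y` for `(a ⇨ x ⊓ y) ⊓ (x ⊔ y)`. Relative to `a`, the conjunct `a ⇨ x ⊓ (y + z)` only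
sees `x ⊓ y ⊓ z`, because `a ⇨ y ⊓ z ≤ a ⇨ y ⊔ z`; and `x ⊔ (y + z)` is `(x ⊔ (a ⇨ y ⊓ z)) ⊓
(x ⊔ y ⊔ z)`, whose first factor is absorbed by `a ⇨ x ⊓ y ⊓ z`. Hence `x + (y + z)` is the
symmetric expression `(a ⇨ x ⊓ y ⊓ z) ⊓ (x ⊔ y ⊔ z)`, which gives associativity. The unit law is
modus ponens `a ⊓ (a ⇨ x) ≤ x`, and hemidistributivity is `x ≤ a ⇨ x` together with
distributivity of the lattice.
-/

section PointedAdd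

variable {A : Type*} [GeneralizedHeytingAlgebra A]

def pointedAdd (a x y : A) : A := (a ⇨ x ⊓ y) ⊓ (x ⊔ y)

theorem pointedAdd_comm (a x y : A) : pointedAdd a x y = pointedAdd a y x := by
  rw [pointedAdd, pointedAdd, inf_comm x, sup_comm x]

theorem pointedAdd_self_right (a x : A) : pointedAdd a x a = x := by
  rw [pointedAdd, himp_inf_distrib, himp_self, inf_top_eq]
  refine le_antisymm ?_ (le_inf le_himp le_sup_left)
  rw [inf_sup_left]
  exact sup_le inf_le_right himp_inf_le

theorem himp_inf_pointedAdd (a x y z : A) :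
    a ⇨ x ⊓ pointedAdd a y z = a ⇨ x ⊓ y ⊓ z := by
  have hle : a ⇨ y ⊓ z ≤ a ⇨ y ⊔ z := himp_le_himp_left (inf_le_left.trans le_sup_left)
  rw [pointedAdd, himp_inf_distrib, himp_inf_distrib, himp_idem, inf_eq_left.mpr hle,
    ← himp_inf_distrib, inf_assoc]

theorem pointedAdd_pointedAdd (a x y z : A) :
    pointedAdd a x (pointedAdd a y z) = (a ⇨ x ⊓ y ⊓ z) ⊓ (x ⊔ y ⊔ z) := by
  have hsup : x ⊔ pointedAdd a y z = (x ⊔ (a ⇨ y ⊓ z)) ⊓ (x ⊔ y ⊔ z) := by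
    rw [pointedAdd, sup_inf_left, sup_assoc]
  have hle : a ⇨ x ⊓ y ⊓ z ≤ x ⊔ (a ⇨ y ⊓ z) :=
    (himp_le_himp_left (le_inf (inf_le_left.trans inf_le_right) inf_le_right)).trans le_sup_right
  rw [pointedAdd, himp_inf_pointedAdd, hsup, ← inf_assoc, inf_eq_left.mpr hle]

theorem pointedAdd_assoc (a x y z : A) :
    pointedAdd a (pointedAdd a x y) z = pointedAdd a x (pointedAdd a y z) := by
  rw [pointedAdd_comm, pointedAdd_pointedAdd, pointedAdd_pointedAdd,
    show z ⊓ x ⊓ y = x ⊓ y ⊓ z by ac_rfl, show z ⊔ x ⊔ y = x ⊔ y ⊔ z by ac_rfl]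

theorem inf_pointedAdd_le (a x y z : A) :
    x ⊓ pointedAdd a y z ≤ pointedAdd a (x ⊓ y) z := by
  refine le_inf ?_ ?_
  · calc x ⊓ pointedAdd a y z ≤ (a ⇨ x) ⊓ (a ⇨ y ⊓ z) := inf_le_inf le_himp inf_le_left
      _ = a ⇨ x ⊓ y ⊓ z := by rw [← himp_inf_distrib, inf_assoc]
  · calc x ⊓ pointedAdd a y z ≤ x ⊓ (y ⊔ z) := inf_le_inf_left _ inf_le_right
      _ = x ⊓ y ⊔ x ⊓ z := inf_sup_left _ _ _
      _ ≤ x ⊓ y ⊔ z := sup_le_sup_left inf_le_right _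

end PointedAdd

/-- In a Brouwerian algebra (generalized Heyting algebra) with a distinguished
element `z0`, the operation `x + y := (z0 ⇨ (x ⊓ y)) ⊓ (x ⊔ y)` is commutative
and associative, has `z0` as a unit, satisfies the hemidistributive law, and
`x + (y + z) = (z0 ⇨ (x ⊓ y ⊓ z)) ⊓ (x ⊔ y ⊔ z)`. -/
theorem pointed_brouwerian_bimonoid {A : Type*} [GeneralizedHeytingAlgebra A]
    (z0 : A) :
    let add : A → A → A := fun x y => (z0 ⇨ (x ⊓ y)) ⊓ (x ⊔ y)
    (∀ x y, add x y = add y x) ∧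
    (∀ x y z, add (add x y) z = add x (add y z)) ∧
    (∀ x, add x z0 = x) ∧
    (∀ x y z, x ⊓ add y z ≤ add (x ⊓ y) z) ∧
    (∀ x y z, add x (add y z) = (z0 ⇨ (x ⊓ y ⊓ z)) ⊓ (x ⊔ y ⊔ z)) :=
  ⟨pointedAdd_comm z0, pointedAdd_assoc z0, pointedAdd_self_right z0, inf_pointedAdd_le z0,
    pointedAdd_pointedAdd z0⟩
end

section
/- Nuclearity lemma for involutive frames: in an involutive frame, for all subsets X₁, X₂ of L one has (X₁^▷◁) ∘ (X₂^▷◁) ⊆ (X₁ ∘ X₂)^▷◁, and consequently ((X₁^▷◁) ∘ X₂)^▷ = (X₁ ∘ X₂)^▷ = (X₁ ∘ (X₂^▷◁))^▷, where X₁ ∘ X₂ := {x₁ ∘ x₂ : x₁ ∈ X₁, x₂ ∈ X₂}. -/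
/-- An involutive frame: monoids `⟨L, mul, one⟩` and `⟨R, add, zero⟩`, maps
`lm, rm : L → R` and `la, ra : R → L`, and a relation `rel ⊆ L × R`
satisfying nuclearity. -/
structure InvFrame (L R : Type*) where
  mul : L → L → L
  one : L
  add : R → R → R
  zero : R
  mul_assoc : ∀ x y z, mul (mul x y) z = mul x (mul y z)
  one_mul : ∀ x, mul one x = x
  mul_one : ∀ x, mul x one = x
  add_assoc : ∀ x y z, add (add x y) z = add x (add y z)
  zero_add : ∀ x, add zero x = x
  add_zero : ∀ x, add x zero = x
  lm : L → R
  rm : L → R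
  la : R → L
  ra : R → L
  rel : L → R → Prop
  nuc_mul_left : ∀ x y z, rel x (add z (lm y)) ↔ rel (mul x y) z
  nuc_mul_right : ∀ x y z, rel (mul x y) z ↔ rel y (add (rm x) z)
  nuc_add_left : ∀ x y z, rel (mul x (ra z)) y ↔ rel x (add y z)
  nuc_add_right : ∀ x y z, rel x (add y z) ↔ rel (mul (la y) x) z

/-- The polarity operator `X ↦ X^▷` sending subsets of `L` to subsets of `R`. -/
def InvFrame.tri {L R : Type*} (F : InvFrame L R) (X : Set L) : Set R :=
  {y | ∀ x ∈ X, F.rel x y}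

/-- The polarity operator `Y ↦ Y^◁` sending subsets of `R` to subsets of `L`. -/
def InvFrame.tril {L R : Type*} (F : InvFrame L R) (Y : Set R) : Set L :=
  {x | ∀ y ∈ Y, F.rel x y}

/-- The complex multiplication `X₁ ∘ X₂ = {x₁ ∘ x₂ : x₁ ∈ X₁, x₂ ∈ X₂}`. -/
def InvFrame.smul {L R : Type*} (F : InvFrame L R) (X₁ X₂ : Set L) : Set L :=
  Set.image2 F.mul X₁ X₂

/-! `tri` and `tril` are the upper and lower polars of `rel`, so `X ↦ X^▷◁` is a closure
operator. The inequality `x₁ ∘ x₂ ⊑ z` can be moved onto either factor by nuclearity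
(`x₁ ⊑ z ⊕ ℓ∘(x₂)`, resp. `x₂ ⊑ r∘(x₁) ⊕ z`), and a set and its closure have the same
elements above them; hence closing one factor of `X₁ ∘ X₂` does not change `(X₁ ∘ X₂)^▷`.
Closing both factors one after the other, the Galois connection gives the inclusion. -/

namespace InvFrame

variable {L R : Type*} (F : InvFrame L R)

theorem subset_tril_tri (X : Set L) : X ⊆ F.tril (F.tri X) :=
  subset_lowerPolar_upperPolar F.rel X

theorem tri_anti : Antitone F.tri := upperPolar_anti F.rel

theorem subset_tril_iff_subset_tri {X : Set L} {Y : Set R} : X ⊆ F.tril Y ↔ Y ⊆ F.tri X :=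
  subset_upperPolar_iff_subset_lowerPolar.symm

theorem tri_smul_subset_tri_smul_tril_tri_left (X₁ X₂ : Set L) :
    F.tri (F.smul X₁ X₂) ⊆ F.tri (F.smul (F.tril (F.tri X₁)) X₂) := by
  rintro z hz _ ⟨x₁, hx₁, x₂, hx₂, rfl⟩
  have hzx₂ : F.add z (F.lm x₂) ∈ F.tri X₁ := fun x₁' hx₁' =>
    (F.nuc_mul_left _ _ _).2 (hz _ (Set.mem_image2_of_mem hx₁' hx₂))
  exact (F.nuc_mul_left _ _ _).1 (hx₁ _ hzx₂)

theorem tri_smul_subset_tri_smul_tril_tri_right (X₁ X₂ : Set L) :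
    F.tri (F.smul X₁ X₂) ⊆ F.tri (F.smul X₁ (F.tril (F.tri X₂))) := by
  rintro z hz _ ⟨x₁, hx₁, x₂, hx₂, rfl⟩
  have hx₁z : F.add (F.rm x₁) z ∈ F.tri X₂ := fun x₂' hx₂' =>
    (F.nuc_mul_right _ _ _).1 (hz _ (Set.mem_image2_of_mem hx₁ hx₂'))
  exact (F.nuc_mul_right _ _ _).2 (hx₂ _ hx₁z)

theorem tri_smul_tril_tri_left (X₁ X₂ : Set L) :
    F.tri (F.smul (F.tril (F.tri X₁)) X₂) = F.tri (F.smul X₁ X₂) :=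
  (F.tri_anti (Set.image2_subset_right (F.subset_tril_tri X₁))).antisymm
    (F.tri_smul_subset_tri_smul_tril_tri_left X₁ X₂)

theorem tri_smul_tril_tri_right (X₁ X₂ : Set L) :
    F.tri (F.smul X₁ (F.tril (F.tri X₂))) = F.tri (F.smul X₁ X₂) :=
  (F.tri_anti (Set.image2_subset_left (F.subset_tril_tri X₂))).antisymm
    (F.tri_smul_subset_tri_smul_tril_tri_right X₁ X₂)

end InvFrame

/-- Nuclearity lemma for involutive frames:
`X₁^▷◁ ∘ X₂^▷◁ ⊆ (X₁ ∘ X₂)^▷◁` and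
`(X₁^▷◁ ∘ X₂)^▷ = (X₁ ∘ X₂)^▷ = (X₁ ∘ X₂^▷◁)^▷`. -/
theorem invFrame_nuclearity {L R : Type*} (F : InvFrame L R) (X₁ X₂ : Set L) :
    F.smul (F.tril (F.tri X₁)) (F.tril (F.tri X₂)) ⊆
      F.tril (F.tri (F.smul X₁ X₂)) ∧
    F.tri (F.smul (F.tril (F.tri X₁)) X₂) = F.tri (F.smul X₁ X₂) ∧
    F.tri (F.smul X₁ (F.tril (F.tri X₂))) = F.tri (F.smul X₁ X₂) := by
  refine ⟨?_, F.tri_smul_tril_tri_left X₁ X₂, F.tri_smul_tril_tri_right X₁ X₂⟩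
  rw [F.subset_tril_iff_subset_tri, F.tri_smul_tril_tri_left, F.tri_smul_tril_tri_right]
end

section
/- Hemidistributivity for involutive frames: in an involutive frame, for all u, v ∈ L, x, y ∈ R and X ⊆ L: if u ∘ s ⊑ x for every s ∈ X and v ⊑ t ⊕ y for every t ∈ X^▷, then u ∘ v ⊑ x ⊕ y. -/
namespace InvFrame

variable {L R : Type*} (F : InvFrame L R)

theorem rm_add_mem_tri_iff {u : L} {x : R} {X : Set L} :
    F.add (F.rm u) x ∈ F.tri X ↔ ∀ s ∈ X, F.rel (F.mul u s) x :=
  forall₂_congr fun s _ => (F.nuc_mul_right u s x).symm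

end InvFrame

/-- Hemidistributivity for involutive frames: if `u ∘ s ⊑ x` for all `s ∈ X`
and `v ⊑ t ⊕ y` for all `t ∈ X^▷`, then `u ∘ v ⊑ x ⊕ y`. -/
theorem invFrame_hemidistributivity {L R : Type*} (F : InvFrame L R)
    (u v : L) (x y : R) (X : Set L)
    (h1 : ∀ s ∈ X, F.rel (F.mul u s) x)
    (h2 : ∀ t ∈ F.tri X, F.rel v (F.add t y)) :
    F.rel (F.mul u v) (F.add x y) := by
  have hX : F.add (F.rm u) x ∈ F.tri X := F.rm_add_mem_tri_iff.mpr h1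
  have hv : F.rel v (F.add (F.rm u) (F.add x y)) := F.add_assoc _ _ _ ▸ h2 _ hX
  exact (F.nuc_mul_right u v _).mpr hv
end

section
/- A commutative Δ₁-extension preserves all admissible joins: if ι: A → B exhibits B as a commutative Δ₁-extension of A, and a = ⋁X is a join in A that is admissible (i.e., a·y = ⋁{x·y : x ∈ X} for every y ∈ A), then ι(a) is the join of ι[X] in B. Dually for admissible meets. -/
/-!
Let `u` be an upper bound of `ι[X]`. By meet density it suffices to show `ι a ≤ ι p + c`
for every generator `ι p + c ≥ u`, where `c` is a complement of `ι q`. A complement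
residuates the multiplication, `z · ι q ≤ ι p ↔ z ≤ ι p + c`, so this reduces to
`a · q ≤ p` in `A`; and since `x · q ≤ p` for every `x ∈ X`, that is exactly what
admissibility of the join provides. Admissible meets are handled dually, using join density.
-/

/-- A commutative bimonoid: a partially ordered set with two commutative
monoid operations, a multiplication `mul` with unit `one` and an addition
`add` with unit `zero`, both monotone in each argument, satisfying the
hemidistributive law `x·(y+z) ≤ (x·y)+z`. -/
structure CommBimonoidOn (A : Type*) [PartialOrder A] where
  mul : A → A → A
  add : A → A → A
  one : A
  zero : A
  mul_assoc : ∀ x y z, mul (mul x y) z = mul x (mul y z)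
  mul_comm : ∀ x y, mul x y = mul y x
  mul_one : ∀ x, mul x one = x
  add_assoc : ∀ x y z, add (add x y) z = add x (add y z)
  add_comm : ∀ x y, add x y = add y x
  add_zero : ∀ x, add x zero = x
  mul_mono : ∀ {x y : A} (z), x ≤ y → mul x z ≤ mul y z
  add_mono : ∀ {x y : A} (z), x ≤ y → add x z ≤ add y z
  hemi : ∀ x y z, mul x (add y z) ≤ add (mul x y) z

/-- `c` is a complement of `a` in the commutative bimonoid `S`. -/
def CommBimonoidOn.IsCompl {A : Type*} [PartialOrder A]
    (S : CommBimonoidOn A) (a c : A) : Prop :=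
  S.mul a c ≤ S.zero ∧ S.one ≤ S.add a c

/-- `B` (with bimonoid structure `SB`) is a commutative Δ₁-extension of `A`
(with bimonoid structure `SA`) via `ι`: `ι` is an order embedding which is a
homomorphism for `·, 1, +, 0`, elements of the form `ι a · (ι b)⁻` are join
dense, and elements of the form `ι a + (ι b)⁻` are meet dense. -/
structure IsDeltaOneExt {A B : Type*} [PartialOrder A] [PartialOrder B]
    (SA : CommBimonoidOn A) (SB : CommBimonoidOn B) (ι : A → B) : Prop where
  emb : ∀ a a' : A, a ≤ a' ↔ ι a ≤ ι a'
  map_mul : ∀ a a', ι (SA.mul a a') = SB.mul (ι a) (ι a')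
  map_one : ι SA.one = SB.one
  map_add : ∀ a a', ι (SA.add a a') = SB.add (ι a) (ι a')
  map_zero : ι SA.zero = SB.zero
  join_dense : ∀ x : B, ∃ S : Set B, IsLUB S x ∧
    ∀ s ∈ S, ∃ a b c, SB.IsCompl (ι b) c ∧ s = SB.mul (ι a) c
  meet_dense : ∀ x : B, ∃ S : Set B, IsGLB S x ∧
    ∀ s ∈ S, ∃ a b c, SB.IsCompl (ι b) c ∧ s = SB.add (ι a) c

theorem isLUB_of_isGLB_dense {α : Type*} [PartialOrder α] {P : α → Prop} {T : Set α} {b : α}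
    (hb : b ∈ upperBounds T) (hdense : ∀ u, ∃ S : Set α, IsGLB S u ∧ ∀ s ∈ S, P s)
    (hle : ∀ g, P g → g ∈ upperBounds T → b ≤ g) : IsLUB T b := by
  refine ⟨hb, fun u hu => ?_⟩
  obtain ⟨S, hS, hSP⟩ := hdense u
  exact hS.2 fun s hs => hle s (hSP s hs) fun t ht => (hu ht).trans (hS.1 hs)

theorem isGLB_of_isLUB_dense {α : Type*} [PartialOrder α] {P : α → Prop} {T : Set α} {b : α}
    (hb : b ∈ lowerBounds T) (hdense : ∀ u, ∃ S : Set α, IsLUB S u ∧ ∀ s ∈ S, P s)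
    (hle : ∀ g, P g → g ∈ lowerBounds T → g ≤ b) : IsGLB T b :=
  isLUB_of_isGLB_dense (α := αᵒᵈ) hb hdense hle

namespace CommBimonoidOn

variable {A : Type*} [PartialOrder A] {S : CommBimonoidOn A}

theorem IsCompl.symm {a c : A} (h : S.IsCompl a c) : S.IsCompl c a :=
  ⟨S.mul_comm c a ▸ h.1, S.add_comm c a ▸ h.2⟩

theorem IsCompl.mul_le_iff_le_add {b c u p : A} (h : S.IsCompl b c) :
    S.mul u b ≤ p ↔ u ≤ S.add p c := by
  constructor
  · intro hub
    calc u = S.mul u S.one := (S.mul_one u).symm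
      _ ≤ S.mul (S.add b c) u := S.mul_comm u S.one ▸ S.mul_mono u h.2
      _ = S.mul u (S.add b c) := S.mul_comm _ _
      _ ≤ S.add (S.mul u b) c := S.hemi u b c
      _ ≤ S.add p c := S.add_mono c hub
  · intro hu
    calc S.mul u b ≤ S.mul (S.add p c) b := S.mul_mono b hu
      _ = S.mul b (S.add c p) := by rw [S.mul_comm, S.add_comm]
      _ ≤ S.add (S.mul b c) p := S.hemi b c p
      _ ≤ S.add S.zero p := S.add_mono p h.1
      _ = p := by rw [S.add_comm, S.add_zero]

end CommBimonoidOn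

namespace IsDeltaOneExt

variable {A B : Type*} [PartialOrder A] [PartialOrder B]
  {SA : CommBimonoidOn A} {SB : CommBimonoidOn B} {ι : A → B}

theorem monotone (hext : IsDeltaOneExt SA SB ι) : Monotone ι :=
  fun a a' h => (hext.emb a a').mp h

theorem mul_le_iff (hext : IsDeltaOneExt SA SB ι) {x q p : A} :
    SB.mul (ι x) (ι q) ≤ ι p ↔ SA.mul x q ≤ p := by
  rw [← hext.map_mul, ← hext.emb]

theorem le_add_iff (hext : IsDeltaOneExt SA SB ι) {p x q : A} :
    ι p ≤ SB.add (ι x) (ι q) ↔ p ≤ SA.add x q := by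
  rw [← hext.map_add, ← hext.emb]

theorem le_add_compl_of_forall_le (hext : IsDeltaOneExt SA SB ι) {a p q : A} {X : Set A}
    {d : B} (hadm : SA.mul a q ∈ lowerBounds (upperBounds ((fun x => SA.mul x q) '' X)))
    (hd : SB.IsCompl (ι q) d) (hX : ∀ x ∈ X, ι x ≤ SB.add (ι p) d) :
    ι a ≤ SB.add (ι p) d := by
  rw [← hd.mul_le_iff_le_add, hext.mul_le_iff]
  refine hadm ?_
  rintro _ ⟨x, hx, rfl⟩
  rw [← hext.mul_le_iff, hd.mul_le_iff_le_add]
  exact hX x hx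

theorem mul_compl_le_of_forall_le (hext : IsDeltaOneExt SA SB ι) {a p q : A} {X : Set A}
    {c : B} (hadm : SA.add a q ∈ upperBounds (lowerBounds ((fun x => SA.add x q) '' X)))
    (hc : SB.IsCompl (ι q) c) (hX : ∀ x ∈ X, SB.mul (ι p) c ≤ ι x) :
    SB.mul (ι p) c ≤ ι a := by
  rw [hc.symm.mul_le_iff_le_add, hext.le_add_iff]
  refine hadm ?_
  rintro _ ⟨x, hx, rfl⟩
  rw [← hext.le_add_iff, ← hc.symm.mul_le_iff_le_add]
  exact hX x hx

end IsDeltaOneExt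

/-- A commutative Δ₁-extension preserves all admissible joins and all
admissible meets. -/
theorem deltaOneExt_preserves_admissible {A B : Type*}
    [PartialOrder A] [PartialOrder B]
    (SA : CommBimonoidOn A) (SB : CommBimonoidOn B) (ι : A → B)
    (hext : IsDeltaOneExt SA SB ι) :
    (∀ (a : A) (X : Set A), IsLUB X a →
      (∀ y : A, IsLUB ((fun x => SA.mul x y) '' X) (SA.mul a y)) →
      IsLUB (ι '' X) (ι a)) ∧
    (∀ (a : A) (X : Set A), IsGLB X a →
      (∀ y : A, IsGLB ((fun x => SA.add x y) '' X) (SA.add a y)) →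
      IsGLB (ι '' X) (ι a)) := by
  constructor
  · intro a X hX hadm
    refine isLUB_of_isGLB_dense (hext.monotone.mem_upperBounds_image hX.1) hext.meet_dense ?_
    rintro _ ⟨p, q, d, hd, rfl⟩ hub
    exact hext.le_add_compl_of_forall_le (hadm q).2 hd fun x hx => hub ⟨x, hx, rfl⟩
  · intro a X hX hadm
    refine isGLB_of_isLUB_dense (hext.monotone.mem_lowerBounds_image hX.1) hext.join_dense ?_
    rintro _ ⟨p, q, c, hc, rfl⟩ hlb
    exact hext.mul_compl_le_of_forall_le (hadm q).2 hc fun x hx => hlb ⟨x, hx, rfl⟩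
end

section
/- Commutative Δ₁-extensions are essential: let ι: A → B exhibit B as a commutative Δ₁-extension of A, and let h: B → C be a monotone map into a commutative bimonoid C preserving ·, 1, +, 0. If the composite h ∘ ι is an order embedding (h(ι(a)) ≤ h(ι(a')) implies a ≤ a'), then h itself is an order embedding. -/
/-!
Complements act as residuals: if `c` complements `b` then `x·c ≤ t ↔ x ≤ b + t`.
Applying this twice, for generators `ι a·c` and `ι a' + c'` (with `c`, `c'` complements of
`ι b`, `ι b'`) the comparison `ι a·c ≤ ι a' + c'` becomes `ι (a·b') ≤ ι (b + a')`, which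
only involves the image of `A`. A bimonoid homomorphism preserves complements, so the same
translation works in `C`, where `h ∘ ι` reflects the order. Hence `h` reflects the order
between generators, and by join and meet density between arbitrary elements of `B`.
-/

namespace CommBimonoidOn

variable {X : Type*} [PartialOrder X] {S : CommBimonoidOn X}

lemma IsCompl.symm_s11 {b c : X} (hbc : S.IsCompl b c) : S.IsCompl c b :=
  ⟨S.mul_comm c b ▸ hbc.1, S.add_comm c b ▸ hbc.2⟩

lemma IsCompl.mul_le_iff_le_add_s11 {b c : X} (hbc : S.IsCompl b c) (x t : X) :
    S.mul x c ≤ t ↔ x ≤ S.add b t := by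
  constructor
  · intro hle
    calc x = S.mul S.one x := by rw [S.mul_comm, S.mul_one]
      _ ≤ S.mul (S.add b c) x := S.mul_mono x hbc.2
      _ = S.mul x (S.add c b) := by rw [S.mul_comm, S.add_comm]
      _ ≤ S.add (S.mul x c) b := S.hemi x c b
      _ ≤ S.add t b := S.add_mono b hle
      _ = S.add b t := S.add_comm _ _
  · intro hle
    calc S.mul x c ≤ S.mul (S.add b t) c := S.mul_mono c hle
      _ = S.mul c (S.add b t) := S.mul_comm _ _
      _ ≤ S.add (S.mul c b) t := S.hemi c b t
      _ ≤ S.add S.zero t := S.add_mono t (S.mul_comm b c ▸ hbc.1)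
      _ = t := by rw [S.add_comm, S.add_zero]

lemma mul_le_add_iff_of_isCompl {b c b' c' : X} (hbc : S.IsCompl b c)
    (hbc' : S.IsCompl b' c') (a a' : X) :
    S.mul a c ≤ S.add a' c' ↔ S.mul a b' ≤ S.add b a' := by
  rw [S.add_comm a' c', ← hbc'.symm_s11.mul_le_iff_le_add_s11, S.mul_assoc, S.mul_comm c b',
    ← S.mul_assoc, hbc.mul_le_iff_le_add_s11]

lemma IsCompl.map {Y : Type*} [PartialOrder Y] {T : CommBimonoidOn Y} {h : X → Y}
    (hmono : Monotone h) (hmul : ∀ x y, h (S.mul x y) = T.mul (h x) (h y))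
    (hone : h S.one = T.one) (hadd : ∀ x y, h (S.add x y) = T.add (h x) (h y))
    (hzero : h S.zero = T.zero) {b c : X} (hbc : S.IsCompl b c) :
    T.IsCompl (h b) (h c) :=
  ⟨hmul b c ▸ hzero ▸ hmono hbc.1, hadd b c ▸ hone ▸ hmono hbc.2⟩

end CommBimonoidOn

namespace IsDeltaOneExt

variable {A B : Type*} [PartialOrder A] [PartialOrder B]
  {SA : CommBimonoidOn A} {SB : CommBimonoidOn B} {ι : A → B}

lemma le_of_forall_mul_le_add (hext : IsDeltaOneExt SA SB ι) {x y : B}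
    (hgen : ∀ a b c a' b' c', SB.IsCompl (ι b) c → SB.IsCompl (ι b') c' →
      SB.mul (ι a) c ≤ x → y ≤ SB.add (ι a') c' → SB.mul (ι a) c ≤ SB.add (ι a') c') :
    x ≤ y := by
  obtain ⟨Sx, hSx, hSx_gen⟩ := hext.join_dense x
  obtain ⟨Ty, hTy, hTy_gen⟩ := hext.meet_dense y
  refine hSx.2 fun s hs => hTy.2 fun t ht => ?_
  obtain ⟨a, b, c, hbc, rfl⟩ := hSx_gen s hs
  obtain ⟨a', b', c', hbc', rfl⟩ := hTy_gen t ht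
  exact hgen a b c a' b' c' hbc hbc' (hSx.1 hs) (hTy.1 ht)

lemma mul_le_add_of_le (hext : IsDeltaOneExt SA SB ι) {a b a' b' : A} {c c' : B}
    (hbc : SB.IsCompl (ι b) c) (hbc' : SB.IsCompl (ι b') c')
    (hle : SA.mul a b' ≤ SA.add b a') :
    SB.mul (ι a) c ≤ SB.add (ι a') c' := by
  rw [CommBimonoidOn.mul_le_add_iff_of_isCompl hbc hbc', ← hext.map_mul, ← hext.map_add]
  exact (hext.emb _ _).mp hle

end IsDeltaOneExt

/-- Commutative Δ₁-extensions are essential: any monotone bimonoid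
homomorphism `h : B → C` whose composite with `ι` is an order embedding is
itself an order embedding. -/
theorem deltaOneExt_essential {A B C : Type*}
    [PartialOrder A] [PartialOrder B] [PartialOrder C]
    (SA : CommBimonoidOn A) (SB : CommBimonoidOn B) (SC : CommBimonoidOn C)
    (ι : A → B) (hext : IsDeltaOneExt SA SB ι)
    (h : B → C)
    (hmono : ∀ x y : B, x ≤ y → h x ≤ h y)
    (hmul : ∀ x y : B, h (SB.mul x y) = SC.mul (h x) (h y))
    (hone : h SB.one = SC.one)
    (hadd : ∀ x y : B, h (SB.add x y) = SC.add (h x) (h y))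
    (hzero : h SB.zero = SC.zero)
    (hcomp : ∀ a a' : A, h (ι a) ≤ h (ι a') → a ≤ a') :
    ∀ x y : B, h x ≤ h y → x ≤ y := by
  intro x y hxy
  have h_monotone : Monotone h := fun x y => hmono x y
  refine hext.le_of_forall_mul_le_add fun a b c a' b' c' hbc hbc' hsx hyt => ?_
  have hst : h (SB.mul (ι a) c) ≤ h (SB.add (ι a') c') :=
    (h_monotone hsx).trans (hxy.trans (h_monotone hyt))
  rw [hmul, hadd, CommBimonoidOn.mul_le_add_iff_of_isCompl
    (hbc.map h_monotone hmul hone hadd hzero) (hbc'.map h_monotone hmul hone hadd hzero),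
    ← hmul, ← hadd, ← hext.map_mul, ← hext.map_add] at hst
  exact hext.mul_le_add_of_le hbc hbc' (hcomp _ _ hst)
end

section
/- In a commutative residuated bimonoid A, for all a, b, x, y ∈ A the following two conditions are equivalent: (1) for all p, q, u, v ∈ A, if u·y ≤ v + x and a·q ≤ b + p then u·q ≤ v + p; (2) for all p, q ∈ A, (a → (b + p)) · (y → (x + q)) ≤ p + q. -/
/-! By residuation the premises of (1) say exactly `u ≤ y → (x + v)` and `q ≤ a → (b + p)`.
So (1) specialised to these largest admissible `u` and `q` is (2), and (2) gives (1) back by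
monotonicity of the multiplication. -/

namespace CommBimonoidOn

variable {A : Type*} [PartialOrder A] (S : CommBimonoidOn A)

theorem mul_le_mul {x x' y y' : A} (hx : x ≤ x') (hy : y ≤ y') :
    S.mul x y ≤ S.mul x' y' :=
  calc S.mul x y ≤ S.mul x' y := S.mul_mono y hx
    _ = S.mul y x' := S.mul_comm x' y
    _ ≤ S.mul y' x' := S.mul_mono x' hy
    _ = S.mul x' y' := S.mul_comm y' x'

theorem mul_res_le {res : A → A → A} (res_law : ∀ x y z : A, S.mul x y ≤ z ↔ y ≤ res x z)
    (x z : A) : S.mul x (res x z) ≤ z :=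
  (res_law x (res x z) z).mpr le_rfl

theorem mul_le_add_iff_le_res {res : A → A → A}
    (res_law : ∀ x y z : A, S.mul x y ≤ z ↔ y ≤ res x z) {u v x y : A} :
    S.mul u y ≤ S.add v x ↔ u ≤ res y (S.add x v) := by
  rw [S.mul_comm, S.add_comm]
  exact res_law y u (S.add x v)

end CommBimonoidOn

/-- In a commutative residuated bimonoid (with residual `res` of the
multiplication), the quantified implication characterizing `x + ȳ ≤ a·b̄`
is equivalent to a family of inequalities. -/
theorem residuated_bimonoid_fraction_criterion {A : Type*} [PartialOrder A]
    (S : CommBimonoidOn A) (res : A → A → A)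
    (res_law : ∀ x y z : A, S.mul x y ≤ z ↔ y ≤ res x z)
    (a b x y : A) :
    (∀ p q u v : A, S.mul u y ≤ S.add v x → S.mul a q ≤ S.add b p →
        S.mul u q ≤ S.add v p) ↔
    (∀ p q : A, S.mul (res a (S.add b p)) (res y (S.add x q)) ≤ S.add p q) := by
  constructor
  · intro h p q
    have key := h p (res a (S.add b p)) (res y (S.add x q)) q
      ((S.mul_le_add_iff_le_res res_law).mpr le_rfl) (S.mul_res_le res_law a _)
    rwa [S.mul_comm, S.add_comm q p] at key
  · intro h p q u v hu hq
    calc S.mul u q ≤ S.mul (res y (S.add x v)) (res a (S.add b p)) :=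
          S.mul_le_mul ((S.mul_le_add_iff_le_res res_law).mp hu) ((res_law a q _).mp hq)
      _ = S.mul (res a (S.add b p)) (res y (S.add x v)) := S.mul_comm _ _
      _ ≤ S.add p v := h p v
      _ = S.add v p := S.add_comm p v
end

section
/- Boolean-pointed Brouwerian algebras admit fractions: in a Boolean-pointed Brouwerian algebra, with x + y := (0 ⇨ (x ⊓ y)) ⊓ (x ⊔ y), for all a, b: a ⊓ (a ⇨ b) ≤ b + (0 ⊓ a), and for all p, q: (a ⇨ (b + p)) ⊓ ((a ⇨ b) ⇨ ((0 ⊓ a) + q)) ≤ p + q. -/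
/-!
Write `L` for the left-hand side of the second inequality. Its `z0`-part is controlled first:
`L ⊓ z0 ⊓ a ≤ b`, so `L ⊓ z0 ≤ a ⇨ b`, which feeds the second factor of `L` and yields
`L ⊓ z0 ≤ z0 ⊓ a ⊓ q`, hence `L ⊓ z0 ≤ p ⊓ q`. For `L ≤ p ⊔ q`, the Boolean-pointed axiom splits
`L` along `a ⊔ (a ⇨ z0) = ⊤`; on both pieces, whatever lies below `a ⇨ b` is below
`(z0 ⊓ a) ⊔ q`, and its `z0 ⊓ a`-component is already below `p ⊓ q`.
-/

theorem le_of_le_sup_of_inf_le_of_inf_le {α : Type*} [DistribLattice α] {x y z w : α}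
    (h : x ≤ y ⊔ z) (hy : x ⊓ y ≤ w) (hz : x ⊓ z ≤ w) : x ≤ w :=
  calc x ≤ x ⊓ (y ⊔ z) := le_inf le_rfl h
    _ = x ⊓ y ⊔ x ⊓ z := inf_sup_left _ _ _
    _ ≤ w := sup_le hy hz

namespace BooleanPointed

variable {A : Type*} [GeneralizedHeytingAlgebra A]

/-- The paper's `x + y`. -/
def add (z0 x y : A) : A := (z0 ⇨ (x ⊓ y)) ⊓ (x ⊔ y)

theorem le_add_iff {z0 x y c : A} : c ≤ add z0 x y ↔ c ⊓ z0 ≤ x ⊓ y ∧ c ≤ x ⊔ y := by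
  rw [add, le_inf_iff, le_himp_iff]

theorem inf_himp_le_add (z0 a b : A) : a ⊓ (a ⇨ b) ≤ add z0 b (z0 ⊓ a) := by
  have hab : a ⊓ (a ⇨ b) ≤ b := inf_himp_le
  refine le_add_iff.2 ⟨le_inf (inf_le_left.trans hab) (le_inf inf_le_right ?_), hab.trans le_sup_left⟩
  exact inf_le_left.trans inf_le_left

theorem himp_add_inf_himp_himp_add_le (z0 : A) (hbp : ∀ x : A, x ⊔ (x ⇨ z0) = ⊤) (a b p q : A) :
    (a ⇨ add z0 b p) ⊓ ((a ⇨ b) ⇨ add z0 (z0 ⊓ a) q) ≤ add z0 p q := by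
  set L := (a ⇨ add z0 b p) ⊓ ((a ⇨ b) ⇨ add z0 (z0 ⊓ a) q)
  obtain ⟨hLa_z0, hLa⟩ : L ⊓ a ⊓ z0 ≤ b ⊓ p ∧ L ⊓ a ≤ b ⊔ p :=
    le_add_iff.1 ((inf_le_inf_right _ inf_le_left).trans himp_inf_le)
  have hL_himp : ∀ {d}, d ≤ L → d ≤ a ⇨ b → d ⊓ z0 ≤ z0 ⊓ a ⊓ q ∧ d ≤ z0 ⊓ a ⊔ q := fun hdL hdc =>
    le_add_iff.1 ((le_inf (hdL.trans inf_le_right) hdc).trans himp_inf_le)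
  have hz0_a : L ⊓ z0 ⊓ a ≤ b ⊓ p := by rwa [inf_right_comm]
  have hz0_himp : L ⊓ z0 ≤ a ⇨ b := le_himp_iff.2 (hz0_a.trans inf_le_left)
  have hz0_aq : L ⊓ z0 ≤ z0 ⊓ a ⊓ q :=
    (le_inf le_rfl inf_le_right).trans (hL_himp inf_le_left hz0_himp).1
  have hz0_le_a : L ⊓ z0 ≤ a := hz0_aq.trans (inf_le_left.trans inf_le_right)
  have hz0 : L ⊓ z0 ≤ p ⊓ q :=
    le_inf (((le_inf le_rfl hz0_le_a).trans hz0_a).trans inf_le_right) (hz0_aq.trans inf_le_right)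
  have below_himp : ∀ {d}, d ≤ L → d ≤ a ⇨ b → d ≤ p ⊔ q := fun hdL hdc =>
    le_of_le_sup_of_inf_le_of_inf_le (hL_himp hdL hdc).2
      ((inf_le_inf hdL inf_le_left).trans (hz0.trans inf_le_sup))
      (inf_le_right.trans le_sup_right)
  refine le_add_iff.2 ⟨hz0, le_of_le_sup_of_inf_le_of_inf_le (le_top.trans (hbp a).ge) ?_ ?_⟩
  · exact le_of_le_sup_of_inf_le_of_inf_le hLa
      (below_himp (inf_le_left.trans inf_le_left) (inf_le_right.trans le_himp))
      (inf_le_right.trans le_sup_left)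
  · refine below_himp inf_le_left (le_himp_iff.2 ?_)
    have hz0_of_himp : L ⊓ (a ⇨ z0) ⊓ a ≤ z0 := (inf_le_inf_right _ inf_le_right).trans himp_inf_le
    exact (le_inf (le_inf (inf_le_left.trans inf_le_left) hz0_of_himp) inf_le_right).trans
      (hz0_a.trans inf_le_left)

end BooleanPointed

/-- Boolean-pointed Brouwerian algebras admit fractions: with
`x + y := (z0 ⇨ (x ⊓ y)) ⊓ (x ⊔ y)`, we have `a ⊓ (a ⇨ b) ≤ b + (z0 ⊓ a)`
and `(a ⇨ (b + p)) ⊓ ((a ⇨ b) ⇨ ((z0 ⊓ a) + q)) ≤ p + q`. -/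
theorem boolean_pointed_brouwerian_fractions {A : Type*}
    [GeneralizedHeytingAlgebra A] (z0 : A)
    (hbp : ∀ x : A, x ⊔ (x ⇨ z0) = ⊤) :
    let add : A → A → A := fun x y => (z0 ⇨ (x ⊓ y)) ⊓ (x ⊔ y)
    ∀ a b : A,
      a ⊓ (a ⇨ b) ≤ add b (z0 ⊓ a) ∧
      ∀ p q : A,
        (a ⇨ add b p) ⊓ ((a ⇨ b) ⇨ add (z0 ⊓ a) q) ≤ add p q :=
  fun a b => ⟨BooleanPointed.inf_himp_le_add z0 a b,
    BooleanPointed.himp_add_inf_himp_himp_add_le z0 hbp a b⟩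
end

section
/- In a cancellative divisible integral commutative residuated lattice, the identity a → (b·x) = (b → a) → ((a → b)·x) holds for all a, b, x. -/
/-!
Cancellativity together with divisibility makes `z * ·` an order embedding that distributes
over `⊓`. Multiplying both sides by `a * (b → a)` and using `a * (a → b) = a ⊓ b = (b → a) * b`,
each side becomes `a * (b → a) ⊓ a * (a → b) * x`, and cancelling `a * (b → a)` gives the identity.
-/

section ResiduatedLattice

variable {A : Type*} [Lattice A] [CommMonoid A] {res : A → A → A}

theorem mul_le_mul_left_of_residual (res_law : ∀ x y z : A, x * y ≤ z ↔ y ≤ res x z)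
    (z : A) {x y : A} (h : x ≤ y) : z * x ≤ z * y :=
  (res_law z x (z * y)).2 (h.trans ((res_law z y _).1 le_rfl))

theorem mul_le_left_of_integral (res_law : ∀ x y z : A, x * y ≤ z ↔ y ≤ res x z)
    (integral : ∀ x : A, x ≤ 1) (x y : A) : x * y ≤ x :=
  calc x * y ≤ x * 1 := mul_le_mul_left_of_residual res_law x (integral y)
    _ = x := mul_one x

theorem res_mul_self_left (res_law : ∀ x y z : A, x * y ≤ z ↔ y ≤ res x z)
    (integral : ∀ x : A, x ≤ 1) (divisible : ∀ x y : A, x * res x y = x ⊓ y)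
    (cancel : ∀ x y z : A, x * y = x * z → y = z) (x y : A) : res x (x * y) = y :=
  cancel x _ _ <| by rw [divisible, inf_eq_right.2 (mul_le_left_of_integral res_law integral x y)]

theorem le_of_mul_le_mul_left_of_residual (res_law : ∀ x y z : A, x * y ≤ z ↔ y ≤ res x z)
    (integral : ∀ x : A, x ≤ 1) (divisible : ∀ x y : A, x * res x y = x ⊓ y)
    (cancel : ∀ x y z : A, x * y = x * z → y = z) {z x y : A} (h : z * x ≤ z * y) : x ≤ y :=
  res_mul_self_left res_law integral divisible cancel z y ▸ (res_law z x (z * y)).1 h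

theorem mul_inf_of_divisible (res_law : ∀ x y z : A, x * y ≤ z ↔ y ≤ res x z)
    (integral : ∀ x : A, x ≤ 1) (divisible : ∀ x y : A, x * res x y = x ⊓ y)
    (cancel : ∀ x y z : A, x * y = x * z → y = z) (z x y : A) :
    z * (x ⊓ y) = z * x ⊓ z * y := by
  refine le_antisymm (le_inf (mul_le_mul_left_of_residual res_law z inf_le_left)
    (mul_le_mul_left_of_residual res_law z inf_le_right)) ?_
  -- `z * x ⊓ z * y = z * x * t` for `t = z * x → z * y`, and cancelling `z` gives `x * t ≤ y`.
  set t := res (z * x) (z * y)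
  have hxt_le_y : x * t ≤ y := by
    refine le_of_mul_le_mul_left_of_residual res_law integral divisible cancel (z := z) ?_
    rw [← mul_assoc, divisible]
    exact inf_le_right
  rw [← divisible, mul_assoc]
  exact mul_le_mul_left_of_residual res_law z
    (le_inf (mul_le_left_of_integral res_law integral x t) hxt_le_y)

end ResiduatedLattice

theorem cancellative_divisible_integral_identity_general {A : Type*} [Lattice A]
    [CommMonoid A]
    (res : A → A → A)
    (res_law : ∀ x y z : A, x * y ≤ z ↔ y ≤ res x z)
    (integral : ∀ x : A, x ≤ 1)
    (divisible : ∀ x y : A, x * res x y = x ⊓ y)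
    (cancel : ∀ x y z : A, x * y = x * z → y = z)
    (a b x : A) :
    res a (b * x) = res (res b a) (res a b * x) := by
  have mul_inf := mul_inf_of_divisible res_law integral divisible cancel
  have hab : a * res a b = a ⊓ b := divisible a b
  have hba : res b a * b = a ⊓ b := by rw [mul_comm, divisible, inf_comm]
  apply cancel (a * res b a)
  calc a * res b a * res a (b * x)
      = res b a * (a * res a (b * x)) := by rw [mul_comm a, mul_assoc]
    _ = res b a * a ⊓ res b a * (b * x) := by rw [divisible, mul_inf]
    _ = a * res b a ⊓ a * (res a b * x) := by
        rw [mul_comm (res b a) a, ← mul_assoc, hba, ← hab, mul_assoc]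
    _ = a * (res b a * res (res b a) (res a b * x)) := by rw [divisible, mul_inf]
    _ = a * res b a * res (res b a) (res a b * x) := (mul_assoc _ _ _).symm

/-- In a cancellative divisible integral commutative residuated lattice,
`a → (b·x) = (b → a) → ((a → b)·x)`. -/
theorem cancellative_divisible_integral_identity {A : Type*} [Lattice A]
    [CommMonoid A]
    (mul_mono : ∀ {x y : A} (z : A), x ≤ y → x * z ≤ y * z)
    (res : A → A → A)
    (res_law : ∀ x y z : A, x * y ≤ z ↔ y ≤ res x z)
    (integral : ∀ x : A, x ≤ 1)
    (divisible : ∀ x y : A, x * res x y = x ⊓ y)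
    (cancel : ∀ x y z : A, x * y = x * z → y = z)
    (a b x : A) :
    res a (b * x) = res (res b a) (res a b * x) :=
  cancellative_divisible_integral_identity_general res res_law integral divisible cancel a b x
end
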